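/- arXiv:2010.11629 — 3 statements merged into one kernel-verified Lean document; each statement's English description precedes it below -/
import Mathlib

section
/- For all real numbers a, b ≥ 0, α ≥ 1, and 0 < δ ≤ 1, it holds that (a + b)^α ≤ (1 + δ) · a^α + (3α/δ)^α · b^α. -/
theorem refined_splitting_inequality (a b α δ : ℝ) (ha : 0 ≤ a) (hb : 0 ≤ b)
    (hα : 1 ≤ α) (hδ : 0 < δ) (hδ1 : δ ≤ 1) :
    (a + b) ^ α ≤ (1 + δ) * a ^ α + (3 * α / δ) ^ α * b ^ α := by
  have hα0 : (0:ℝ) < α := lt_of_lt_of_le one_pos hα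
  rcases le_or_gt b (a * δ / (2 * α)) with hcase | hcase
  · -- small b case
    have ht : 0 ≤ δ / (2 * α) := by positivity
    have key : a + b ≤ a * (1 + δ / (2 * α)) := by
      have : a * (1 + δ / (2 * α)) = a + a * δ / (2 * α) := by field_simp
      rw [this]; linarith
    have h1 : (a + b) ^ α ≤ (a * (1 + δ / (2 * α))) ^ α :=
      Real.rpow_le_rpow (by positivity) key hα0.le
    have h2 : (a * (1 + δ / (2 * α))) ^ α = a ^ α * (1 + δ / (2 * α)) ^ α :=
      Real.mul_rpow ha (by positivity)
    have h3 : (1 + δ / (2 * α)) ^ α ≤ Real.exp (δ / 2) := by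
      have he := Real.add_one_le_exp (δ / (2 * α))
      calc (1 + δ / (2 * α)) ^ α ≤ (Real.exp (δ / (2 * α))) ^ α :=
            Real.rpow_le_rpow (by positivity) (by linarith) hα0.le
        _ = Real.exp (δ / (2 * α) * α) := by
            rw [← Real.exp_mul]
        _ = Real.exp (δ / 2) := by
            congr 1; field_simp
    have h4 : Real.exp (δ / 2) ≤ 1 + δ := by
      have h5 := Real.add_one_le_exp (-(δ / 2))
      have h6 : Real.exp (-(δ / 2)) = (Real.exp (δ / 2))⁻¹ := Real.exp_neg _
      have hE : 0 < Real.exp (δ / 2) := Real.exp_pos _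
      rw [h6] at h5
      have h7 : (1 - δ / 2) * Real.exp (δ / 2) ≤ 1 := by
        have := mul_le_mul_of_nonneg_right h5 hE.le
        rwa [inv_mul_cancel₀ hE.ne', neg_add_eq_sub] at this
      nlinarith
    have h8 : 0 ≤ (3 * α / δ) ^ α * b ^ α := by positivity
    have haα : 0 ≤ a ^ α := Real.rpow_nonneg ha α
    calc (a + b) ^ α ≤ a ^ α * (1 + δ / (2 * α)) ^ α := by rw [← h2]; exact h1
      _ ≤ a ^ α * (1 + δ) := by
          exact mul_le_mul_of_nonneg_left (h3.trans h4) haα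
      _ ≤ (1 + δ) * a ^ α + (3 * α / δ) ^ α * b ^ α := by linarith [mul_comm (a ^ α) (1 + δ)]
  · -- large b case
    have hb0 : 0 < b := lt_of_le_of_lt (by positivity) hcase
    have key : a + b ≤ 3 * α / δ * b := by
      have h1 : a ≤ 2 * α * b / δ := by
        rw [le_div_iff₀ hδ]
        have := (div_lt_iff₀ (by positivity : (0:ℝ) < 2 * α)).mp hcase
        nlinarith
      have h2 : b ≤ α * b / δ := by
        rw [le_div_iff₀ hδ]
        nlinarith
      have : 3 * α / δ * b = 2 * α * b / δ + α * b / δ := by ring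
      linarith [this.le]
    have h1 : (a + b) ^ α ≤ (3 * α / δ * b) ^ α :=
      Real.rpow_le_rpow (by positivity) key hα0.le
    have h2 : (3 * α / δ * b) ^ α = (3 * α / δ) ^ α * b ^ α :=
      Real.mul_rpow (by positivity) hb
    have h3 : 0 ≤ (1 + δ) * a ^ α := by positivity
    calc (a + b) ^ α ≤ (3 * α / δ) ^ α * b ^ α := by rw [← h2]; exact h1
      _ ≤ (1 + δ) * a ^ α + (3 * α / δ) ^ α * b ^ α := by linarith
end

section
/- Consider n jobs with release times r_j, deadlines d_j, and processing durations p_j ≥ 0. There exists a schedule processing jobs one at a time (each job j processed for total time p_j, only within [r_j, d_j]) if and only if for every interval [t, t'], the sum of p_j over all jobs j with t ≤ r_j and d_j ≤ t' is at most t' − t. -/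
/-!
Necessity: the jobs whose windows lie in `[t, t']` are processed on disjoint subsets of `[t, t']`.

Sufficiency is the earliest-deadline-first schedule, built against a measurable set `T` of
still-available time, with the Hall condition measured by `volume (T ∩ [t, t'])`. The job `j₀`
with the earliest deadline receives `T ∩ [r j₀, x]`, where `x ≤ d j₀` is chosen by the
intermediate value theorem so that this chunk has measure `p j₀`. The remaining jobs satisfy the
Hall condition on the remaining time: for an interval `[t, t']` holding one of them, `d j₀ ≤ t'`,
so either the chunk lies left of `t`, or `T ∩ [min t (r j₀), t']` is covered by the chunk and the
remaining time in `[t, t']`, and the Hall condition of all jobs on `[min t (r j₀), t']` gives the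
one for the remaining jobs on `[t, t']`.
-/

open MeasureTheory Set

lemma volume_inter_Icc_ne_top (T : Set ℝ) (a b : ℝ) : volume (T ∩ Icc a b) ≠ ⊤ :=
  ((measure_mono inter_subset_right).trans_lt measure_Icc_lt_top).ne

lemma lipschitzWith_toReal_volume_inter_Icc (T : Set ℝ) (a : ℝ) :
    LipschitzWith 1 fun x => (volume (T ∩ Icc a x)).toReal := by
  refine LipschitzWith.of_le_add fun x y => ?_
  have hcover : T ∩ Icc a x ⊆ (T ∩ Icc a y) ∪ Ioc y x := by
    rintro z ⟨hzT, haz, hzx⟩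
    rcases le_or_gt z y with hzy | hyz
    · exact Or.inl ⟨hzT, haz, hzy⟩
    · exact Or.inr ⟨hyz, hzx⟩
  have hvol : volume (T ∩ Icc a x) ≤ volume (T ∩ Icc a y) + ENNReal.ofReal (x - y) := by
    rw [← Real.volume_Ioc]
    exact (measure_mono hcover).trans (measure_union_le _ _)
  calc (volume (T ∩ Icc a x)).toReal
        ≤ (volume (T ∩ Icc a y) + ENNReal.ofReal (x - y)).toReal :=
        ENNReal.toReal_mono (by simp [volume_inter_Icc_ne_top]) hvol
    _ = (volume (T ∩ Icc a y)).toReal + max (x - y) 0 := by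
        rw [ENNReal.toReal_add (volume_inter_Icc_ne_top _ _ _) ENNReal.ofReal_ne_top,
          ENNReal.toReal_ofReal']
    _ ≤ (volume (T ∩ Icc a y)).toReal + dist x y := by
        rw [Real.dist_eq]
        exact add_le_add_right (max_le (le_abs_self _) (abs_nonneg _)) _

lemma exists_volume_inter_Icc_eq {T : Set ℝ} {a b q : ℝ} (hab : a ≤ b) (hq : 0 ≤ q)
    (hqT : ENNReal.ofReal q ≤ volume (T ∩ Icc a b)) :
    ∃ x ∈ Icc a b, volume (T ∩ Icc a x) = ENNReal.ofReal q := by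
  have ha : (volume (T ∩ Icc a a)).toReal = 0 := by
    rw [ENNReal.toReal_eq_zero_iff]
    exact Or.inl (measure_mono_null inter_subset_right (by simp))
  have hb : q ≤ (volume (T ∩ Icc a b)).toReal :=
    (ENNReal.ofReal_le_iff_le_toReal (volume_inter_Icc_ne_top _ _ _)).1 hqT
  obtain ⟨x, hx, hxq⟩ := intermediate_value_Icc hab
    (lipschitzWith_toReal_volume_inter_Icc T a).continuous.continuousOn ⟨ha ▸ hq, hb⟩
  exact ⟨x, hx, by rw [← hxq, ENNReal.ofReal_toReal (volume_inter_Icc_ne_top _ _ _)]⟩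

section Scheduling

variable {ι : Type*} (r d p : ι → ℝ)

noncomputable def demand (S : Finset ι) (t t' : ℝ) : ℝ :=
  ∑ j ∈ S with t ≤ r j ∧ d j ≤ t', p j

def HallCondition (S : Finset ι) (T : Set ℝ) : Prop :=
  ∀ t t', t ≤ t' → ENNReal.ofReal (demand r d p S t t') ≤ volume (T ∩ Icc t t')

structure IsScheduleWithin (S : Finset ι) (T : Set ℝ) (A : ι → Set ℝ) : Prop where
  measurableSet : ∀ j ∈ S, MeasurableSet (A j)
  subset : ∀ j ∈ S, A j ⊆ T
  pairwiseDisjoint : (S : Set ι).PairwiseDisjoint A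
  subset_Icc : ∀ j ∈ S, A j ⊆ Icc (r j) (d j)
  volume_eq : ∀ j ∈ S, volume (A j) = ENNReal.ofReal (p j)

variable {r d p}

lemma demand_nonneg (hp : ∀ j, 0 ≤ p j) (S : Finset ι) (t t' : ℝ) :
    0 ≤ demand r d p S t t' :=
  Finset.sum_nonneg fun j _ => hp j

lemma demand_mono (hp : ∀ j, 0 ≤ p j) {S S' : Finset ι} (hS : S ⊆ S') {s t t' u : ℝ}
    (hst : s ≤ t) (htu : t' ≤ u) : demand r d p S t t' ≤ demand r d p S' s u := by
  refine Finset.sum_le_sum_of_subset_of_nonneg (fun j hj => ?_) fun j _ _ => hp j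
  simp only [Finset.mem_filter] at hj ⊢
  exact ⟨hS hj.1, hst.trans hj.2.1, hj.2.2.trans htu⟩

lemma le_demand (hp : ∀ j, 0 ≤ p j) {S : Finset ι} {j : ι} (hj : j ∈ S) :
    p j ≤ demand r d p S (r j) (d j) :=
  Finset.single_le_sum (fun i _ => hp i) (Finset.mem_filter.2 ⟨hj, le_rfl, le_rfl⟩)

lemma demand_erase_add [DecidableEq ι] {S : Finset ι} {j : ι} (hj : j ∈ S) {t t' : ℝ}
    (htj : t ≤ r j) (hjt : d j ≤ t') :
    demand r d p (S.erase j) t t' + p j = demand r d p S t t' := by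
  rw [demand, Finset.filter_erase]
  exact Finset.sum_erase_add _ _ (Finset.mem_filter.2 ⟨hj, htj, hjt⟩)

lemma hallCondition_univ_iff {S : Finset ι} :
    HallCondition r d p S univ ↔ ∀ t t', t ≤ t' → demand r d p S t t' ≤ t' - t := by
  refine forall₂_congr fun t t' => imp_congr_right fun htt' => ?_
  rw [univ_inter, Real.volume_Icc, ENNReal.ofReal_le_ofReal_iff (sub_nonneg.2 htt')]

lemma isScheduleWithin_univ_iff [Fintype ι] {A : ι → Set ℝ} :
    IsScheduleWithin r d p Finset.univ univ A ↔
      (∀ j, MeasurableSet (A j)) ∧ Pairwise (Function.onFun Disjoint A) ∧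
        (∀ j, A j ⊆ Icc (r j) (d j)) ∧ ∀ j, volume (A j) = ENNReal.ofReal (p j) := by
  constructor
  · rintro ⟨hm, -, hdisj, hI, hv⟩
    refine ⟨fun j => hm j (Finset.mem_univ j), ?_, fun j => hI j (Finset.mem_univ j),
      fun j => hv j (Finset.mem_univ j)⟩
    simpa [Set.PairwiseDisjoint, Set.pairwise_univ] using hdisj
  · rintro ⟨hm, hdisj, hI, hv⟩
    exact ⟨fun j _ => hm j, fun j _ => subset_univ _,
      by simpa [Set.PairwiseDisjoint, Set.pairwise_univ] using hdisj, fun j _ => hI j, fun j _ => hv j⟩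

lemma IsScheduleWithin.hallCondition (hp : ∀ j, 0 ≤ p j) {S : Finset ι} {T : Set ℝ}
    {A : ι → Set ℝ} (h : IsScheduleWithin r d p S T A) : HallCondition r d p S T := by
  intro t t' _
  set F := S.filter fun j => t ≤ r j ∧ d j ≤ t'
  have hFS : ∀ j ∈ F, j ∈ S := fun j hj => (Finset.mem_filter.1 hj).1
  calc ENNReal.ofReal (demand r d p S t t') = ∑ j ∈ F, volume (A j) := by
        rw [demand, ENNReal.ofReal_sum_of_nonneg fun j _ => hp j]
        exact Finset.sum_congr rfl fun j hj => (h.volume_eq j (hFS j hj)).symm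
    _ = volume (⋃ j ∈ F, A j) :=
        (measure_biUnion_finset (h.pairwiseDisjoint.subset fun j hj => hFS j hj)
          fun j hj => h.measurableSet j (hFS j hj)).symm
    _ ≤ volume (T ∩ Icc t t') := by
        refine measure_mono (iUnion₂_subset fun j hj => subset_inter (h.subset j (hFS j hj)) ?_)
        obtain ⟨hjS, htj, hjt⟩ := Finset.mem_filter.1 hj
        exact (h.subset_Icc j hjS).trans (Icc_subset_Icc htj hjt)

lemma IsScheduleWithin.update_insert [DecidableEq ι] {S : Finset ι} {T U C : Set ℝ}
    {A : ι → Set ℝ} {j : ι} (h : IsScheduleWithin r d p S (T \ U) A) (hj : j ∉ S)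
    (hCm : MeasurableSet C) (hCT : C ⊆ T) (hCU : C ⊆ U) (hCI : C ⊆ Icc (r j) (d j))
    (hCv : volume C = ENNReal.ofReal (p j)) :
    IsScheduleWithin r d p (insert j S) T (Function.update A j C) := by
  have hupdate {P : ι → Set ℝ → Prop} (hPj : P j C) (hPS : ∀ i ∈ S, P i (A i)) :
      ∀ i ∈ insert j S, P i (Function.update A j C i) := by
    intro i hi
    rcases Finset.mem_insert.1 hi with rfl | hi
    · simpa using hPj
    · rw [Function.update_of_ne (ne_of_mem_of_not_mem hi hj)]
      exact hPS i hi
  refine ⟨hupdate hCm h.measurableSet, hupdate (P := fun _ B => B ⊆ T) hCT fun i hi => (h.subset i hi).trans sdiff_subset,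
    ?_, hupdate (P := fun i B => B ⊆ Icc (r i) (d i)) hCI h.subset_Icc, hupdate (P := fun i B => volume B = ENNReal.ofReal (p i)) hCv h.volume_eq⟩
  rw [Finset.coe_insert, Set.pairwiseDisjoint_insert]
  refine ⟨h.pairwiseDisjoint.mono_on fun i hi =>
    (Function.update_of_ne (ne_of_mem_of_not_mem hi hj) _ _).le, fun i hi hji => ?_⟩
  rw [Function.update_self, Function.update_of_ne hji.symm]
  exact disjoint_sdiff_right.mono hCU (h.subset i hi)

lemma HallCondition.erase_diff [DecidableEq ι] (hp : ∀ j, 0 ≤ p j) {S : Finset ι}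
    {T : Set ℝ} {j₀ : ι} {x : ℝ} (hH : HallCondition r d p S T) (hj₀ : j₀ ∈ S)
    (hmin : ∀ j ∈ S, d j₀ ≤ d j)
    (hC : volume (T ∩ Icc (r j₀) x) = ENNReal.ofReal (p j₀)) :
    HallCondition r d p (S.erase j₀) (T \ Icc (r j₀) x) := by
  intro t t' htt'
  rcases ((S.erase j₀).filter fun j => t ≤ r j ∧ d j ≤ t').eq_empty_or_nonempty
    with hF | ⟨j₁, hj₁⟩
  · simp [demand, hF]
  obtain ⟨hj₁S, -, hj₁t'⟩ := Finset.mem_filter.1 hj₁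
  have hd₀ : d j₀ ≤ t' := (hmin j₁ (Finset.mem_of_mem_erase hj₁S)).trans hj₁t'
  rcases lt_or_ge x t with hxt | htx
  · calc ENNReal.ofReal (demand r d p (S.erase j₀) t t')
          ≤ ENNReal.ofReal (demand r d p S t t') :=
          ENNReal.ofReal_le_ofReal (demand_mono hp (S.erase_subset j₀) le_rfl le_rfl)
      _ ≤ volume (T ∩ Icc t t') := hH t t' htt'
      _ ≤ volume ((T \ Icc (r j₀) x) ∩ Icc t t') :=
          measure_mono fun z ⟨hzT, hz⟩ => ⟨⟨hzT, fun hzC => by linarith [hzC.2, hz.1]⟩, hz⟩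
  set s := min t (r j₀)
  have hcover : T ∩ Icc s t' ⊆ (T ∩ Icc (r j₀) x) ∪ ((T \ Icc (r j₀) x) ∩ Icc t t') := by
    rintro z ⟨hzT, hsz, hzt'⟩
    by_cases hzC : z ∈ Icc (r j₀) x
    · exact Or.inl ⟨hzT, hzC⟩
    · exact Or.inr ⟨⟨hzT, hzC⟩, le_of_not_gt fun hzt =>
        hzC ⟨(min_le_iff.1 hsz).resolve_left (not_le.2 hzt), hzt.le.trans htx⟩, hzt'⟩
  have hdemand : demand r d p (S.erase j₀) t t' + p j₀ ≤ demand r d p S s t' := by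
    rw [← demand_erase_add hj₀ (min_le_right _ _) hd₀]
    exact add_le_add_left (demand_mono hp subset_rfl (min_le_left _ _) le_rfl) _
  refine (ENNReal.add_le_add_iff_right (ENNReal.ofReal_ne_top : ENNReal.ofReal (p j₀) ≠ ⊤)).1 ?_
  calc ENNReal.ofReal (demand r d p (S.erase j₀) t t') + ENNReal.ofReal (p j₀)
        = ENNReal.ofReal (demand r d p (S.erase j₀) t t' + p j₀) :=
        (ENNReal.ofReal_add (demand_nonneg hp _ _ _) (hp j₀)).symm
    _ ≤ ENNReal.ofReal (demand r d p S s t') := ENNReal.ofReal_le_ofReal hdemand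
    _ ≤ volume (T ∩ Icc s t') := hH s t' ((min_le_left _ _).trans htt')
    _ ≤ volume (T ∩ Icc (r j₀) x) + volume ((T \ Icc (r j₀) x) ∩ Icc t t') :=
        (measure_mono hcover).trans (measure_union_le _ _)
    _ = volume ((T \ Icc (r j₀) x) ∩ Icc t t') + ENNReal.ofReal (p j₀) := by
        rw [hC, add_comm]

lemma exists_isScheduleWithin_of_hallCondition [DecidableEq ι]
    (hrd : ∀ j, r j ≤ d j) (hp : ∀ j, 0 ≤ p j) (S : Finset ι) {T : Set ℝ}
    (hT : MeasurableSet T) (hH : HallCondition r d p S T) :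
    ∃ A, IsScheduleWithin r d p S T A := by
  induction S using Finset.strongInduction generalizing T with
  | H S ih =>
  rcases S.eq_empty_or_nonempty with rfl | hS
  · exact ⟨fun _ => ∅, by simp, by simp, by simp, by simp, by simp⟩
  obtain ⟨j₀, hj₀, hmin⟩ := S.exists_min_image d hS
  obtain ⟨x, hx, hC⟩ := exists_volume_inter_Icc_eq (hrd j₀) (hp j₀)
    ((ENNReal.ofReal_le_ofReal (le_demand hp hj₀)).trans (hH _ _ (hrd j₀)))
  obtain ⟨A, hA⟩ := ih _ (Finset.erase_ssubset hj₀) (hT.diff measurableSet_Icc)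
    (hH.erase_diff hp hj₀ hmin hC)
  refine ⟨Function.update A j₀ (T ∩ Icc (r j₀) x), ?_⟩
  rw [← Finset.insert_erase hj₀]
  exact hA.update_insert (Finset.notMem_erase _ _) (hT.inter measurableSet_Icc)
    inter_subset_left inter_subset_right (inter_subset_right.trans (Icc_subset_Icc_right hx.2)) hC

end Scheduling

/-- A feasibility characterization for single-machine preemptive scheduling:
jobs are processed one at a time (pairwise disjoint processing sets),
job `j` is processed only within `[r j, d j]` for total time `p j`. -/
theorem edf_feasibility_iff_hall
    (n : ℕ) (r d p : Fin n → ℝ)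
    (hrd : ∀ j, r j ≤ d j) (hp : ∀ j, 0 ≤ p j) :
    (∃ A : Fin n → Set ℝ,
        (∀ j, MeasurableSet (A j)) ∧
        (Pairwise (Function.onFun Disjoint A)) ∧
        (∀ j, A j ⊆ Set.Icc (r j) (d j)) ∧
        (∀ j, volume (A j) = ENNReal.ofReal (p j))) ↔
      ∀ t t' : ℝ, t ≤ t' →
        (∑ j ∈ Finset.univ.filter (fun j => t ≤ r j ∧ d j ≤ t'), p j) ≤ t' - t := by
  calc (∃ A : Fin n → Set ℝ, _)
      ↔ ∃ A, IsScheduleWithin r d p Finset.univ univ A :=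
        exists_congr fun _ => isScheduleWithin_univ_iff.symm
    _ ↔ HallCondition r d p Finset.univ univ :=
        ⟨fun ⟨_, hA⟩ => hA.hallCondition hp,
          exists_isScheduleWithin_of_hallCondition hrd hp _ MeasurableSet.univ⟩
    _ ↔ _ := hallCondition_univ_iff
end

section
/- For every γ ≥ 0 and α > 1: max( γ^α · 2^{α-1}, (2/3) · ((3-γ)/2)^α ) ≥ 2^{α-1} · (3/(3^{1/α}·4^{1-1/α} + 1))^α, with equality when γ = 3/(3^{1/α}·4^{1-1/α} + 1). -/
theorem online_lower_bound_balance (α : ℝ) (hα : 1 < α) :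
    (∀ γ : ℝ, 0 ≤ γ →
      2 ^ (α - 1) * (3 / (3 ^ (1 / α) * 4 ^ (1 - 1 / α) + 1)) ^ α ≤
        max (γ ^ α * 2 ^ (α - 1)) ((2 / 3) * (((3 - γ) / 2) ^ α))) ∧
    (let γ₀ : ℝ := 3 / (3 ^ (1 / α) * 4 ^ (1 - 1 / α) + 1);
      max (γ₀ ^ α * 2 ^ (α - 1)) ((2 / 3) * (((3 - γ₀) / 2) ^ α)) =
        2 ^ (α - 1) * (3 / (3 ^ (1 / α) * 4 ^ (1 - 1 / α) + 1)) ^ α) := by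
  have hα0 : (0:ℝ) < α := by linarith
  set c : ℝ := 3 ^ (1/α) * 4 ^ (1 - 1/α) with hc
  have hc0 : 0 < c := by positivity
  set g0 : ℝ := 3 / (c + 1) with hgdef
  have hg0 : 0 < g0 := by positivity
  have hg3 : g0 < 3 := by
    rw [hgdef, div_lt_iff₀ (by linarith)]; nlinarith
  have hcα : c ^ α = 3 * 4 ^ (α - 1) := by
    rw [hc, Real.mul_rpow (by positivity) (by positivity),
        ← Real.rpow_mul (by norm_num), ← Real.rpow_mul (by norm_num),
        one_div_mul_cancel (ne_of_gt hα0),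
        show (1 - 1/α) * α = α - 1 by field_simp, Real.rpow_one]
  have hsplit : (3 - g0) / 2 = g0 * (c / 2) := by
    rw [hgdef]; field_simp; ring
  have heq : (2/3 : ℝ) * (((3 - g0)/2) ^ α) = g0 ^ α * 2 ^ (α - 1) := by
    rw [hsplit, Real.mul_rpow (le_of_lt hg0) (by positivity),
        Real.div_rpow (le_of_lt hc0) (by norm_num), hcα]
    have h4 : (4:ℝ) ^ (α-1) = 2^(α-1) * 2^(α-1) := by
      rw [← Real.mul_rpow (by norm_num) (by norm_num)]; norm_num
    have h2 : (2:ℝ) ^ α = 2 * 2^(α-1) := by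
      nth_rewrite 1 [show α = 1 + (α-1) by ring]
      rw [Real.rpow_add (by norm_num), Real.rpow_one]
    have h2pos : (0:ℝ) < (2:ℝ)^(α-1) := by positivity
    rw [h4, h2]
    field_simp
  constructor
  · intro γ hγ
    rcases le_or_gt g0 γ with h | h
    · refine le_trans ?_ (le_max_left _ _)
      rw [mul_comm]
      have := Real.rpow_le_rpow (x := g0) (y := γ) (le_of_lt hg0) h (le_of_lt hα0)
      have h2p : (0:ℝ) < (2:ℝ)^(α-1) := by positivity
      nlinarith [this]
    · refine le_trans ?_ (le_max_right _ _)
      rw [mul_comm, ← heq]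
      have := Real.rpow_le_rpow (x := (3-g0)/2) (y := (3-γ)/2)
        (by linarith) (by linarith) (le_of_lt hα0)
      nlinarith [this]
  · dsimp only
    rw [heq, max_self, mul_comm]
end
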